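/- arXiv:1104.0098 — 4 statements merged into one kernel-verified Lean document; each statement's English description precedes it below -/
import Mathlib

section
/- Let G_τ(A,C) = Σ_{y=1}^h f_y ‖m_y − Σ A C_y‖² + τ ‖A‖_F² with τ > 0. If (Â, Ĉ) is a stationary point of G_τ (i.e., all partial derivatives with respect to the entries of A and of C_1,…,C_h vanish at (Â, Ĉ)), then Â = 0. -/
/-!
The data term of `G_τ` depends on `(A, C)` only through the products `A C_y`, so it is invariant
under `(A, C) ↦ (c A, C / c)`. Hence `G_τ((1 + t) A, C) - G_τ(A, (1 + t) C)` is the ridge term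
`τ ((1 + t)² - 1) ‖A‖_F²`, with derivative `2 τ ‖A‖_F²` at `t = 0`. At a stationary point the
partial derivatives along a basis vanish, so the whole Fréchet derivative of the polynomial `G_τ`
vanishes, and with it both directional derivatives; thus `‖A‖_F = 0`.
-/

open Matrix

/-- The ridge SIR criterion
`G_τ(A,C) = Σ_y f_y ‖m_y − Σ A C_y‖² + τ ‖A‖_F²`. -/
noncomputable def Gt {p d h : ℕ} (f : Fin h → ℝ) (m : Fin h → Fin p → ℝ)
    (S : Matrix (Fin p) (Fin p) ℝ) (τ : ℝ)
    (A : Matrix (Fin p) (Fin d) ℝ) (C : Fin h → Fin d → ℝ) : ℝ :=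
  (∑ y, f y * ∑ i, (m y i - S.mulVec (A.mulVec (C y)) i) ^ 2)
    + τ * ∑ i, ∑ j, (A i j) ^ 2

theorem hasFDerivAt_zero_of_lineDeriv_basis_eq_zero {ι V : Type*} [NormedAddCommGroup V]
    [NormedSpace ℝ V] {F : V → ℝ} {x : V} (b : Module.Basis ι ℝ V)
    (hF : DifferentiableAt ℝ F x) (h : ∀ i, lineDeriv ℝ F x (b i) = 0) :
    HasFDerivAt F (0 : V →L[ℝ] ℝ) x := by
  convert hF.hasFDerivAt
  refine ContinuousLinearMap.coe_injective <| b.ext fun i => ?_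
  simpa [hF.lineDeriv_eq_fderiv] using (h i).symm

theorem Function.update_add_eq_add_single {ι M : Type*} [DecidableEq ι] [AddZeroClass M]
    (C : ι → M) (y : ι) (v : M) : Function.update C y (C y + v) = C + Pi.single y v := by
  ext z
  by_cases hz : z = y <;> simp [hz, Function.update_of_ne]

theorem Matrix.sum_sq_eq_zero_iff {m n R : Type*} [Fintype m] [Fintype n] [Ring R]
    [LinearOrder R] [IsStrictOrderedRing R] (A : Matrix m n R) :
    ∑ i, ∑ j, A i j ^ 2 = 0 ↔ A = 0 := by
  simp only [Fintype.sum_eq_zero_iff_of_nonneg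
      (fun i => Finset.sum_nonneg fun j _ => sq_nonneg (A i j)),
    Fintype.sum_eq_zero_iff_of_nonneg (fun j => sq_nonneg _), funext_iff, Pi.zero_apply,
    sq_eq_zero_iff]
  exact Matrix.ext_iff

section Gt

open scoped Matrix.Norms.Elementwise

variable {p d h : ℕ} (f : Fin h → ℝ) (m : Fin h → Fin p → ℝ) (S : Matrix (Fin p) (Fin p) ℝ)
  (τ : ℝ)

theorem differentiable_Gt :
    Differentiable ℝ
      (fun x : Matrix (Fin p) (Fin d) ℝ × (Fin h → Fin d → ℝ) => Gt f m S τ x.1 x.2) := by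
  simp only [Gt, Matrix.mulVec, dotProduct]
  fun_prop

theorem Gt_smul_left (c : ℝ) (A : Matrix (Fin p) (Fin d) ℝ) (C : Fin h → Fin d → ℝ) :
    Gt f m S τ (c • A) C = Gt f m S τ A (c • C) + τ * (c ^ 2 - 1) * ∑ i, ∑ j, A i j ^ 2 := by
  simp only [Gt, Matrix.smul_mulVec, Pi.smul_apply, Matrix.mulVec_smul, Matrix.smul_apply,
    smul_eq_mul, mul_pow, ← Finset.mul_sum]
  ring

theorem hasDerivAt_Gt_add_smul_self_sub (A : Matrix (Fin p) (Fin d) ℝ)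
    (C : Fin h → Fin d → ℝ) :
    HasDerivAt (fun t : ℝ => Gt f m S τ (A + t • A) C - Gt f m S τ A (C + t • C))
      (2 * τ * ∑ i, ∑ j, A i j ^ 2) 0 := by
  have hridge : HasDerivAt (fun t : ℝ => τ * ((1 + t) ^ 2 - 1) * ∑ i, ∑ j, A i j ^ 2)
      (2 * τ * ∑ i, ∑ j, A i j ^ 2) 0 :=
    (((((hasDerivAt_id' (0 : ℝ)).const_add 1).fun_pow 2).sub_const 1).const_mul τ).mul_const
      (∑ i, ∑ j, A i j ^ 2) |>.congr_deriv (by ring)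
  convert hridge using 2 with t
  rw [show A + t • A = (1 + t) • A by module, Gt_smul_left,
    show C + t • C = (1 + t) • C by module]
  ring

theorem stationary_implies_A_eq_zero_general {p d h : ℕ} (f : Fin h → ℝ)
    (m : Fin h → Fin p → ℝ) (S : Matrix (Fin p) (Fin p) ℝ)
    (τ : ℝ) (hτ : 0 < τ)
    (Ahat : Matrix (Fin p) (Fin d) ℝ) (Chat : Fin h → Fin d → ℝ)
    (hA : ∀ (i : Fin p) (k : Fin d),
      deriv (fun t : ℝ => Gt f m S τ (Ahat + t • Matrix.single i k (1 : ℝ)) Chat) 0 = 0)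
    (hC : ∀ (y : Fin h) (j : Fin d),
      deriv (fun t : ℝ =>
        Gt f m S τ Ahat (Function.update Chat y (Chat y + t • (Pi.single j 1 : Fin d → ℝ)))) 0 = 0) :
    Ahat = 0 := by
  have hcrit := hasFDerivAt_zero_of_lineDeriv_basis_eq_zero
    ((Matrix.stdBasis ℝ (Fin p) (Fin d)).prod (Pi.basis fun _ : Fin h => Pi.basisFun ℝ (Fin d)))
    (differentiable_Gt f m S τ (Ahat, Chat)) <| by
    rintro (⟨i, k⟩ | ⟨y, j⟩)
    · simpa [lineDeriv, Matrix.stdBasis_eq_single] using hA i k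
    · simpa [lineDeriv, Function.update_add_eq_add_single, Pi.single_smul] using hC y j
  have hscale : HasDerivAt ((fun t : ℝ => Gt f m S τ (Ahat + t • Ahat) Chat)
      - fun t : ℝ => Gt f m S τ Ahat (Chat + t • Chat)) 0 0 := by
    simpa only [Prod.smul_mk, smul_zero, Prod.mk_add_mk, add_zero, _root_.zero_apply, sub_self]
      using (hcrit.hasLineDerivAt (Ahat, 0)).sub (hcrit.hasLineDerivAt (0, Chat))
  have hnorm : 2 * τ * ∑ i, ∑ j, Ahat i j ^ 2 = 0 :=
    (hasDerivAt_Gt_add_smul_self_sub f m S τ Ahat Chat).unique hscale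
  exact (Matrix.sum_sq_eq_zero_iff Ahat).1 (by simpa [hτ.ne'] using hnorm)

/-- If `τ > 0` and `(Â, Ĉ)` is a stationary point of `G_τ` (all partial derivatives
with respect to the entries of `A` and of `C_1,…,C_h` vanish), then `Â = 0`. -/
theorem stationary_implies_A_eq_zero {p d h : ℕ} (f : Fin h → ℝ) (hf : ∀ y, 0 < f y)
    (m : Fin h → Fin p → ℝ) (S : Matrix (Fin p) (Fin p) ℝ) (hS : S.IsSymm)
    (τ : ℝ) (hτ : 0 < τ)
    (Ahat : Matrix (Fin p) (Fin d) ℝ) (Chat : Fin h → Fin d → ℝ)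
    (hA : ∀ (i : Fin p) (k : Fin d),
      deriv (fun t : ℝ => Gt f m S τ (Ahat + t • Matrix.single i k (1 : ℝ)) Chat) 0 = 0)
    (hC : ∀ (y : Fin h) (j : Fin d),
      deriv (fun t : ℝ =>
        Gt f m S τ Ahat (Function.update Chat y (Chat y + t • (Pi.single j 1 : Fin d → ℝ)))) 0 = 0) :
    Ahat = 0 :=
  stationary_implies_A_eq_zero_general f m S τ hτ Ahat Chat hA hC

end Gt
end

section
/- Let G_τ(A,C) = Σ_{y=1}^h f_y ‖m_y − Σ A C_y‖² + τ ‖A‖_F² with τ > 0. If (Â, Ĉ) is a global minimizer of G_τ over ℝ^{p×d} × (ℝ^d)^h, then Â = 0 and consequently G_τ(Â, C) = Σ_{y=1}^h f_y ‖m_y‖² for every C ∈ (ℝ^d)^h. -/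
open Matrix

/-- If `τ > 0` and `(Â, Ĉ)` is a global minimizer of `G_τ`, then `Â = 0` and
consequently `G_τ(Â, C) = Σ_y f_y ‖m_y‖²` for every `C`. -/
theorem minimizer_implies_A_eq_zero {p d h : ℕ} (f : Fin h → ℝ) (hf : ∀ y, 0 < f y)
    (m : Fin h → Fin p → ℝ) (S : Matrix (Fin p) (Fin p) ℝ) (hS : S.IsSymm)
    (τ : ℝ) (hτ : 0 < τ)
    (Ahat : Matrix (Fin p) (Fin d) ℝ) (Chat : Fin h → Fin d → ℝ)
    (hmin : ∀ (A : Matrix (Fin p) (Fin d) ℝ) (C : Fin h → Fin d → ℝ),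
      Gt f m S τ Ahat Chat ≤ Gt f m S τ A C) :
    Ahat = 0 ∧ ∀ C : Fin h → Fin d → ℝ,
      Gt f m S τ Ahat C = ∑ y, f y * ∑ i, (m y i) ^ 2 := by
  have hA : Ahat = 0 := by
    have h := hmin ((1/2 : ℝ) • Ahat) (fun y => (2:ℝ) • Chat y)
    have hm : ∀ y, ((1/2:ℝ) • Ahat).mulVec ((2:ℝ) • Chat y) = Ahat.mulVec (Chat y) := by
      intro y
      rw [Matrix.smul_mulVec, Matrix.mulVec_smul, smul_smul]
      norm_num
    simp only [Gt, hm, Matrix.smul_apply, smul_eq_mul] at h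
    have hrw : ∑ i, ∑ j, ((1/2:ℝ) * Ahat i j) ^ 2
        = (1/4 : ℝ) * ∑ i, ∑ j, (Ahat i j) ^ 2 := by
      rw [Finset.mul_sum]
      refine Finset.sum_congr rfl fun i _ => ?_
      rw [Finset.mul_sum]
      refine Finset.sum_congr rfl fun j _ => ?_
      ring
    rw [hrw] at h
    have hnn : (0:ℝ) ≤ ∑ i, ∑ j, (Ahat i j) ^ 2 :=
      Finset.sum_nonneg fun i _ => Finset.sum_nonneg fun j _ => sq_nonneg _
    have hz : ∑ i, ∑ j, (Ahat i j) ^ 2 = 0 := by nlinarith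
    ext i j
    have h1 := (Finset.sum_eq_zero_iff_of_nonneg
      (fun i _ => Finset.sum_nonneg fun j _ => sq_nonneg (Ahat i j))).mp hz i
      (Finset.mem_univ i)
    have h2 := (Finset.sum_eq_zero_iff_of_nonneg
      (fun j _ => sq_nonneg (Ahat i j))).mp h1 j (Finset.mem_univ j)
    simpa using pow_eq_zero_iff (n := 2) (by norm_num) |>.mp h2
  subst hA
  refine ⟨rfl, fun C => ?_⟩
  simp [Gt, Matrix.zero_mulVec, Matrix.mulVec_zero]
end

section
/- Let Σ be a symmetric positive semidefinite p×p real matrix with rank(Σ) ≥ d, and let y₀ be such that Σ m_{y₀} ≠ 0. Choose orthonormal eigenvectors q_1 = q*, q_2, …, q_d of Σ with positive eigenvalues λ_1, …, λ_d such that q*ᵀ m_{y₀} ≠ 0, and for ε > 0 let A be the p×d matrix with columns ε q_1, …, ε q_d. Then Aᵀ Σ² A = ε² diag(λ_1², …, λ_d²), which is invertible, and with C_{y₀} = (AᵀΣ²A)^{-1} AᵀΣ m_{y₀} one has m_{y₀}ᵀ Σ A C_{y₀} = Σ_{i=1}^d (q_iᵀ m_{y₀})² ≥ (q*ᵀ m_{y₀})²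 > 0. -/
/-!
Write `Q` for the `p × d` matrix with columns `q_i`, so that `Qᵀ Q = 1` and `Σ Q = Q diag(λ)`.
Then `B := Σ A = Q N` with `N = ε diag(λ)` invertible, hence `Aᵀ Σ² A = Bᵀ B = Nᵀ N = ε² diag(λ²)`,
and the quadratic form `mᵀ Σ A C` equals `mᵀ B (Bᵀ B)⁻¹ Bᵀ m`. The matrix `B (Bᵀ B)⁻¹ Bᵀ` is the
orthogonal projection onto the column space of `B`, which does not change when `B = Q N` is
replaced by `Q`; so it is `Q Qᵀ`, and the form is `‖Qᵀ m‖² = ∑ i, (q_iᵀ m)²`.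
-/

open Matrix

namespace Matrix

variable {m n o R : Type*} [Fintype m] [CommRing R]

/-- The orthogonal projection onto the column space of `B`, when `Bᵀ B` is invertible. -/
noncomputable def orthProjCols [Fintype n] [DecidableEq n] (B : Matrix m n R) : Matrix m m R :=
  B * (Bᵀ * B)⁻¹ * Bᵀ

theorem of_mul_transpose_of_eq_one [DecidableEq n] (q : n → m → R)
    (h : ∀ i j, q i ⬝ᵥ q j = if i = j then 1 else 0) : of q * (of q)ᵀ = 1 := by
  ext i j
  simpa [mul_apply, one_apply, dotProduct] using h i j

theorem mul_transpose_of_eq_transpose_of_mul_diagonal [Fintype n] [DecidableEq n] (S : Matrix m m R)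
    (q : n → m → R) (l : n → R) (h : ∀ i, S *ᵥ q i = l i • q i) :
    S * (of q)ᵀ = (of q)ᵀ * diagonal l := by
  ext k j
  rw [mul_diagonal]
  simpa [mul_apply, mulVec, dotProduct, mul_comm] using congrFun (h j) k

theorem transpose_mul_mul_self_mul_of_transpose_eq {S : Matrix m m R} (hS : Sᵀ = S)
    (A : Matrix m o R) : Aᵀ * (S * S) * A = (S * A)ᵀ * (S * A) := by
  rw [transpose_mul, hS, Matrix.mul_assoc, Matrix.mul_assoc, Matrix.mul_assoc]

theorem transpose_mul_self_mul_of_transpose_mul_self_eq_one [Fintype n] [DecidableEq n] {Q : Matrix m n R}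
    (hQ : Qᵀ * Q = 1) (N : Matrix n o R) : (Q * N)ᵀ * (Q * N) = Nᵀ * N := by
  rw [transpose_mul, Matrix.mul_assoc, ← Matrix.mul_assoc Qᵀ, hQ, Matrix.one_mul]

theorem orthProjCols_mul [Fintype n] [DecidableEq n] {Q : Matrix m n R} (hQ : Qᵀ * Q = 1)
    {N : Matrix n n R} (hN : IsUnit N.det) : orthProjCols (Q * N) = Q * Qᵀ := by
  have hNt : IsUnit Nᵀ.det := by rwa [det_transpose]
  calc orthProjCols (Q * N) = Q * (N * N⁻¹) * (Nᵀ⁻¹ * Nᵀ) * Qᵀ := by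
        rw [orthProjCols, transpose_mul_self_mul_of_transpose_mul_self_eq_one hQ,
          Matrix.mul_inv_rev, transpose_mul]
        simp only [Matrix.mul_assoc]
    _ = Q * Qᵀ := by
        rw [mul_nonsing_inv _ hN, nonsing_inv_mul _ hNt, Matrix.mul_one, Matrix.mul_one]

theorem dotProduct_mulVec_mulVec_inv_eq_orthProjCols [Fintype n] [DecidableEq n] {S : Matrix m m R}
    (hS : Sᵀ = S) (A : Matrix m n R) (v : m → R) :
    v ⬝ᵥ S *ᵥ (A *ᵥ ((Aᵀ * (S * S) * A)⁻¹ *ᵥ ((Aᵀ * S) *ᵥ v)))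
      = v ⬝ᵥ orthProjCols (S * A) *ᵥ v := by
  have hAS : Aᵀ * S = (S * A)ᵀ := by rw [transpose_mul, hS]
  rw [transpose_mul_mul_self_mul_of_transpose_eq hS, hAS, orthProjCols]
  simp only [mulVec_mulVec, Matrix.mul_assoc]

theorem dotProduct_mul_transpose_mulVec [Fintype n] (Q : Matrix m n R) (v : m → R) :
    v ⬝ᵥ (Q * Qᵀ) *ᵥ v = (Qᵀ *ᵥ v) ⬝ᵥ (Qᵀ *ᵥ v) := by
  rw [← mulVec_mulVec, dotProduct_mulVec, mulVec_transpose]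

end Matrix

theorem perturbation_construction_general {p d : ℕ} (hd : 0 < d)
    (S : Matrix (Fin p) (Fin p) ℝ) (hS : S.PosSemidef)
    (m : Fin p → ℝ)
    (q : Fin d → Fin p → ℝ) (l : Fin d → ℝ)
    (hl : ∀ i, 0 < l i)
    (heig : ∀ i, S.mulVec (q i) = l i • q i)
    (horth : ∀ i j, q i ⬝ᵥ q j = if i = j then 1 else 0)
    (hqm : q ⟨0, hd⟩ ⬝ᵥ m ≠ 0)
    (ε : ℝ) (hε : 0 < ε) :
    let A : Matrix (Fin p) (Fin d) ℝ := Matrix.of fun i j => ε * q j i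
    (Aᵀ * (S * S) * A = Matrix.diagonal (fun j => ε ^ 2 * (l j) ^ 2))
      ∧ IsUnit (Aᵀ * (S * S) * A).det
      ∧ (let C := (Aᵀ * (S * S) * A)⁻¹.mulVec ((Aᵀ * S).mulVec m)
         m ⬝ᵥ S.mulVec (A.mulVec C) = ∑ i, (q i ⬝ᵥ m) ^ 2
           ∧ (q ⟨0, hd⟩ ⬝ᵥ m) ^ 2 ≤ ∑ i, (q i ⬝ᵥ m) ^ 2
           ∧ 0 < ∑ i, (q i ⬝ᵥ m) ^ 2) := by
  intro A
  set Q : Matrix (Fin p) (Fin d) ℝ := (of q)ᵀ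
  have hsymm : Sᵀ = S := hS.isHermitian
  have hQ : Qᵀ * Q = 1 := by simpa [Q] using of_mul_transpose_of_eq_one q horth
  have hSA : S * A = Q * (ε • diagonal l) := by
    have hA : A = ε • Q := by ext; simp [A, Q]
    rw [hA, Matrix.mul_smul, mul_transpose_of_eq_transpose_of_mul_diagonal S q l heig,
      Matrix.mul_smul]
  have hN : IsUnit (ε • diagonal l).det := by
    rw [det_smul, det_diagonal, isUnit_iff_ne_zero]
    exact mul_ne_zero (by positivity) (Finset.prod_ne_zero_iff.2 fun j _ => (hl j).ne')
  have hgram : Aᵀ * (S * S) * A = diagonal fun j => ε ^ 2 * l j ^ 2 := by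
    rw [transpose_mul_mul_self_mul_of_transpose_eq hsymm, hSA,
      transpose_mul_self_mul_of_transpose_mul_self_eq_one hQ, transpose_smul, diagonal_transpose, smul_mul_smul_comm, diagonal_mul_diagonal,
      ← diagonal_smul]
    congr 1
    ext j
    simp only [Pi.smul_apply, smul_eq_mul]
    ring
  have hle : (q ⟨0, hd⟩ ⬝ᵥ m) ^ 2 ≤ ∑ i, (q i ⬝ᵥ m) ^ 2 :=
    Finset.single_le_sum (f := fun i => (q i ⬝ᵥ m) ^ 2) (fun i _ => sq_nonneg _)
      (Finset.mem_univ _)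
  refine ⟨hgram, ?_, ?_, hle, (sq_pos_of_ne_zero hqm).trans_le hle⟩
  · rw [hgram, det_diagonal, isUnit_iff_ne_zero]
    exact Finset.prod_ne_zero_iff.2 fun j _ => by have := hl j; positivity
  · rw [dotProduct_mulVec_mulVec_inv_eq_orthProjCols hsymm, hSA, orthProjCols_mul hQ hN,
      dotProduct_mul_transpose_mulVec]
    simp [Q, mulVec, dotProduct, sq]

/-- Construction of the perturbation matrix in the proof of non-existence of the
ridge SIR estimator: with orthonormal eigenvectors `q_1 = q*, …, q_d` of `Σ`
associated to positive eigenvalues `λ_1, …, λ_d`, `q*ᵀ m_{y₀} ≠ 0`, and `A` the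
matrix with columns `ε q_1, …, ε q_d`, one has `Aᵀ Σ² A = ε² diag(λ_1², …, λ_d²)`
(which is invertible), and with `C_{y₀} = (Aᵀ Σ² A)⁻¹ Aᵀ Σ m_{y₀}`,
`m_{y₀}ᵀ Σ A C_{y₀} = Σ_i (q_iᵀ m_{y₀})² ≥ (q*ᵀ m_{y₀})² > 0`. -/
theorem perturbation_construction {p d : ℕ} (hd : 0 < d)
    (S : Matrix (Fin p) (Fin p) ℝ) (hS : S.PosSemidef) (hrank : d ≤ S.rank)
    (m : Fin p → ℝ) (hm : S.mulVec m ≠ 0)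
    (q : Fin d → Fin p → ℝ) (l : Fin d → ℝ)
    (hl : ∀ i, 0 < l i)
    (heig : ∀ i, S.mulVec (q i) = l i • q i)
    (horth : ∀ i j, q i ⬝ᵥ q j = if i = j then 1 else 0)
    (hqm : q ⟨0, hd⟩ ⬝ᵥ m ≠ 0)
    (ε : ℝ) (hε : 0 < ε) :
    let A : Matrix (Fin p) (Fin d) ℝ := Matrix.of fun i j => ε * q j i
    (Aᵀ * (S * S) * A = Matrix.diagonal (fun j => ε ^ 2 * (l j) ^ 2))
      ∧ IsUnit (Aᵀ * (S * S) * A).det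
      ∧ (let C := (Aᵀ * (S * S) * A)⁻¹.mulVec ((Aᵀ * S).mulVec m)
         m ⬝ᵥ S.mulVec (A.mulVec C) = ∑ i, (q i ⬝ᵥ m) ^ 2
           ∧ (q ⟨0, hd⟩ ⬝ᵥ m) ^ 2 ≤ ∑ i, (q i ⬝ᵥ m) ^ 2
           ∧ 0 < ∑ i, (q i ⬝ᵥ m) ^ 2) :=
  perturbation_construction_general hd S hS m q l hl heig horth hqm ε hε
end

section
/- Let G_τ(A,C) = Σ_{y=1}^h f_y ‖m_y − Σ A C_y‖² + τ ‖A‖_F² with τ > 0. Suppose (A*, C*) satisfies the alternating least-squares fixed-point equations: C*_y = (A*ᵀ Σ² A*)^{-1} A*ᵀ Σ m_y for all y (with A*ᵀ Σ² A* invertible), and vec(A*) = (Σ_y f_y (C*_yᵀ ⊗ Σ)ᵀ (C*_yᵀ ⊗ Σ) + τ I_{pd})^{-1} Σ_y f_y (C*_yᵀ ⊗ Σ)ᵀ m_y. Then A* = 0. In particular no such (A*, C*) with A*ᵀΣ²A* invertible exists when d ≥ 1. -/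
/-!
Pairing the `A`-equation with `vec A*` gives
`Σ_y f_y ‖S A* C*_y‖² + τ ‖A*‖_F² = Σ_y f_y ⟪S A* C*_y, m_y⟫`,
since `(C*_yᵀ ⊗ S) vec A* = S A* C*_y`.
The `C`-equation is the normal equation of the least-squares fit of `m_y` by `S A* c`, so the
residual is orthogonal to the fitted value: `⟪S A* C*_y, m_y⟫ = ‖S A* C*_y‖²`.
Hence `τ ‖A*‖_F² = 0`.
-/

open Matrix

/-- Kronecker product `cᵀ ⊗ Σ` of a row vector with a `p × p` matrix,
as a `p × (pd)` matrix. -/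
def kronRow {p d : ℕ} (c : Fin d → ℝ) (S : Matrix (Fin p) (Fin p) ℝ) :
    Matrix (Fin p) (Fin d × Fin p) ℝ :=
  Matrix.of fun i jk => c jk.1 * S i jk.2

/-- The column-stacking operator `vec`. -/
def vec {p d : ℕ} (A : Matrix (Fin p) (Fin d) ℝ) : Fin d × Fin p → ℝ :=
  fun jk => A jk.2 jk.1

lemma vec_eq_zero_iff {p d : ℕ} {A : Matrix (Fin p) (Fin d) ℝ} : _root_.vec A = 0 ↔ A = 0 :=
  ⟨fun h => Matrix.ext fun i j => congrFun h (j, i), fun h => h ▸ rfl⟩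

lemma kronRow_mulVec_vec {p d : ℕ} (c : Fin d → ℝ) (S : Matrix (Fin p) (Fin p) ℝ)
    (A : Matrix (Fin p) (Fin d) ℝ) :
    kronRow c S *ᵥ _root_.vec A = (S * A) *ᵥ c := by
  funext i
  simp only [kronRow, _root_.vec, mulVec, dotProduct, mul_apply, of_apply,
    Fintype.sum_prod_type, Finset.sum_mul]
  exact Finset.sum_congr rfl fun k _ => Finset.sum_congr rfl fun j _ => by ring

namespace Matrix

variable {R ι n q : Type*} [Fintype ι] [Fintype n] [Fintype q]

lemma eq_zero_or_mulVec_eq_of_eq_nonsing_inv_mulVec [CommRing R] [DecidableEq q]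
    {M : Matrix q q R} {x b : q → R} (h : x = M⁻¹ *ᵥ b) : x = 0 ∨ M *ᵥ x = b := by
  by_cases hM : IsUnit M.det
  · right
    rw [h, mulVec_mulVec, mul_nonsing_inv _ hM, one_mulVec]
  · left
    rwa [nonsing_inv_apply_not_isUnit _ hM, zero_mulVec] at h

lemma mulVec_dotProduct_self_eq_of_normal_eq [CommSemiring R] {B : Matrix n q R} {c : q → R}
    {m : n → R} (h : (Bᵀ * B) *ᵥ c = Bᵀ *ᵥ m) : B *ᵥ c ⬝ᵥ B *ᵥ c = B *ᵥ c ⬝ᵥ m := by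
  rw [← dotProduct_transpose_mulVec, mulVec_mulVec, h, dotProduct_transpose_mulVec,
    dotProduct_comm]

lemma eq_zero_of_ridge_normal_eq [CommRing R] [LinearOrder R] [IsStrictOrderedRing R]
    [DecidableEq q] (f : ι → R) (K : ι → Matrix n q R) (m : ι → n → R) {τ : R} (hτ : τ ≠ 0)
    {x : q → R}
    (hx : (∑ y, f y • ((K y)ᵀ * K y) + τ • (1 : Matrix q q R)) *ᵥ x
      = ∑ y, f y • (K y)ᵀ *ᵥ m y)
    (horth : ∀ y, K y *ᵥ x ⬝ᵥ K y *ᵥ x = K y *ᵥ x ⬝ᵥ m y) :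
    x = 0 := by
  have hpair := congrArg (x ⬝ᵥ ·) hx
  simp only [add_mulVec, sum_mulVec, smul_mulVec, one_mulVec, ← mulVec_mulVec, dotProduct_add,
    dotProduct_sum, dotProduct_smul, smul_eq_mul, dotProduct_transpose_mulVec] at hpair
  simp only [dotProduct_comm (m _), ← horth, add_eq_left, mul_eq_zero, hτ, false_or] at hpair
  exact dotProduct_self_eq_zero.mp hpair

end Matrix

theorem als_fixed_point_degenerate_general {p d h : ℕ} (f : Fin h → ℝ)
    (m : Fin h → Fin p → ℝ) (S : Matrix (Fin p) (Fin p) ℝ) (hS : S.IsSymm)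
    (τ : ℝ) (hτ : 0 < τ)
    (Astar : Matrix (Fin p) (Fin d) ℝ) (Cstar : Fin h → Fin d → ℝ)
    (hinv : IsUnit (Astarᵀ * (S * S) * Astar).det)
    (hC : ∀ y, Cstar y
      = (Astarᵀ * (S * S) * Astar)⁻¹.mulVec ((Astarᵀ * S).mulVec (m y)))
    (hA : _root_.vec Astar
      = ((∑ y, f y • ((kronRow (Cstar y) S)ᵀ * kronRow (Cstar y) S))
          + τ • (1 : Matrix (Fin d × Fin p) (Fin d × Fin p) ℝ))⁻¹.mulVec
          (∑ y, f y • (kronRow (Cstar y) S)ᵀ.mulVec (m y))) :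
    Astar = 0 ∧ (1 ≤ d → False) := by
  have hgram : (S * Astar)ᵀ * (S * Astar) = Astarᵀ * (S * S) * Astar := by
    rw [transpose_mul, hS.eq, Matrix.mul_assoc, Matrix.mul_assoc, Matrix.mul_assoc]
  have hnormal : ∀ y, ((S * Astar)ᵀ * (S * Astar)) *ᵥ Cstar y = (S * Astar)ᵀ *ᵥ m y := by
    intro y
    rw [hgram, hC y, mulVec_mulVec, mul_nonsing_inv _ hinv, one_mulVec, transpose_mul, hS.eq]
  have hA0 : Astar = 0 := by
    refine _root_.vec_eq_zero_iff.mp ((eq_zero_or_mulVec_eq_of_eq_nonsing_inv_mulVec hA).elim id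
      fun hridge => eq_zero_of_ridge_normal_eq f _ m hτ.ne' hridge fun y => ?_)
    rw [kronRow_mulVec_vec]
    exact mulVec_dotProduct_self_eq_of_normal_eq (hnormal y)
  refine ⟨hA0, fun hd => ?_⟩
  have : Nonempty (Fin d) := ⟨⟨0, hd⟩⟩
  simp [hA0] at hinv

/-- If `(A*, C*)` satisfies the alternating least-squares fixed-point equations of the
ridge SIR criterion with `τ > 0` and `A*ᵀ Σ² A*` invertible, then `A* = 0`; in
particular no such pair exists when `d ≥ 1`. -/
theorem als_fixed_point_degenerate {p d h : ℕ} (f : Fin h → ℝ) (hf : ∀ y, 0 < f y)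
    (m : Fin h → Fin p → ℝ) (S : Matrix (Fin p) (Fin p) ℝ) (hS : S.IsSymm)
    (τ : ℝ) (hτ : 0 < τ)
    (Astar : Matrix (Fin p) (Fin d) ℝ) (Cstar : Fin h → Fin d → ℝ)
    (hinv : IsUnit (Astarᵀ * (S * S) * Astar).det)
    (hC : ∀ y, Cstar y
      = (Astarᵀ * (S * S) * Astar)⁻¹.mulVec ((Astarᵀ * S).mulVec (m y)))
    (hA : _root_.vec Astar
      = ((∑ y, f y • ((kronRow (Cstar y) S)ᵀ * kronRow (Cstar y) S))
          + τ • (1 : Matrix (Fin d × Fin p) (Fin d × Fin p) ℝ))⁻¹.mulVec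
          (∑ y, f y • (kronRow (Cstar y) S)ᵀ.mulVec (m y))) :
    Astar = 0 ∧ (1 ≤ d → False) :=
  als_fixed_point_degenerate_general f m S hS τ hτ Astar Cstar hinv hC hA
end
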